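/- arXiv:1412.6310 — 4 statements merged into one kernel-verified Lean document; each statement's English description precedes it below -/
import Mathlib

section
/- Let f be continuous on [a,b] and 0 < α < 1, and fix x ∈ (a,b]. Then the set Λ(α,f,x) = { ξ ∈ [a,x] : f(ξ) = Γ(2-α)·I^{1-α}_{a+}f(x)·(x-a)^{α-1} } is a nonempty closed subset of [a,x]. -/
/-!
Against the weight `t ↦ (x - t) ^ (-α)`, whose integral over `[a, x]` is `(x - a) ^ (1 - α) / (1 - α)`,
the first mean value theorem for integrals gives `ξ ∈ [a, x]` with `I^{1-α}_{a+} f(x)` equal to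
`f ξ` times the fractional integral of `1`. Since `Γ(2 - α) = (1 - α) Γ(1 - α)`, the normalising
factor `Γ(2 - α) (x - a) ^ (α - 1)` makes the latter `1`, so `ξ ∈ Λ`. The set `Λ` is the preimage
of a point under `f` restricted to `[a, x]`, hence closed.
-/

open Set intervalIntegral Real

theorem intervalIntegrable_sub_rpow {r : ℝ} (hr : -1 < r) (x a b : ℝ) :
    IntervalIntegrable (fun t => (x - t) ^ r) MeasureTheory.volume a b := by
  simpa using (intervalIntegrable_rpow' (a := x - a) (b := x - b) hr).comp_sub_left x

theorem integral_sub_rpow {r : ℝ} (hr : -1 < r) (a x : ℝ) :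
    ∫ t in a..x, (x - t) ^ r = (x - a) ^ (r + 1) / (r + 1) := by
  rw [integral_comp_sub_left (fun t => t ^ r) x, integral_rpow (Or.inl hr), sub_self,
    zero_rpow (by linarith), sub_zero]

theorem exists_eq_Gamma_mul_riemannLiouville_mul_rpow {f : ℝ → ℝ} {a x α : ℝ} (hax : a < x)
    (hα : α < 1) (hf : ContinuousOn f (Icc a x)) :
    ∃ ξ ∈ Icc a x, f ξ = Gamma (2 - α) *
      ((1 / Gamma (1 - α)) * ∫ t in a..x, f t * (x - t) ^ (-α)) * (x - a) ^ (α - 1) := by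
  have hr : -1 < -α := by linarith
  obtain ⟨ξ, hξ, hmean⟩ := exists_eq_const_mul_intervalIntegral_of_nonneg
    (by rwa [uIcc_of_le hax.le]) (intervalIntegrable_sub_rpow hr x a x)
    fun t ht => rpow_nonneg (sub_nonneg.2 (uIoc_of_le hax.le ▸ ht).2) _
  refine ⟨ξ, uIcc_of_le hax.le ▸ hξ, ?_⟩
  have hΓ : Gamma (2 - α) = (1 - α) * Gamma (1 - α) := by
    rw [show 2 - α = (1 - α) + 1 by ring, Gamma_add_one (by linarith)]
  have hpow : (x - a) ^ (1 - α) * (x - a) ^ (α - 1) = 1 := by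
    rw [← rpow_add (by linarith)]; norm_num
  have h1α : 1 - α ≠ 0 := by linarith
  have hΓ₀ : Gamma (1 - α) ≠ 0 := (Gamma_pos_of_pos (by linarith)).ne'
  rw [hmean, integral_sub_rpow hr, hΓ, neg_add_eq_sub]
  field_simp
  linear_combination -f ξ * hpow

theorem fractional_mean_value_set_nonempty_closed_general (a b x α : ℝ)
    (hx : x ∈ Set.Ioc a b) (hα : α ∈ Set.Ioo (0:ℝ) 1)
    (f : ℝ → ℝ) (hf : ContinuousOn f (Set.Icc a b)) :
    let Λ : Set ℝ := {ξ ∈ Set.Icc a x |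
      f ξ = Real.Gamma (2 - α) *
        ((1 / Real.Gamma (1 - α)) * ∫ t in a..x, f t * (x - t) ^ (-α)) *
        (x - a) ^ (α - 1)}
    Λ.Nonempty ∧ IsClosed Λ ∧ Λ ⊆ Set.Icc a x := by
  intro Λ
  have hf' : ContinuousOn f (Icc a x) := hf.mono (Icc_subset_Icc le_rfl hx.2)
  obtain ⟨ξ, hξ, hfξ⟩ := exists_eq_Gamma_mul_riemannLiouville_mul_rpow hx.1 hα.2 hf'
  exact ⟨⟨ξ, hξ, hfξ⟩, hf'.preimage_isClosed_of_isClosed isClosed_Icc isClosed_singleton,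
    sep_subset _ _⟩

/-- The set `Λ(α, f, x)` of fractional mean values is a nonempty closed subset of `[a,x]`. -/
theorem fractional_mean_value_set_nonempty_closed (a b x α : ℝ) (hab : a < b)
    (hx : x ∈ Set.Ioc a b) (hα : α ∈ Set.Ioo (0:ℝ) 1)
    (f : ℝ → ℝ) (hf : ContinuousOn f (Set.Icc a b)) :
    let Λ : Set ℝ := {ξ ∈ Set.Icc a x |
      f ξ = Real.Gamma (2 - α) *
        ((1 / Real.Gamma (1 - α)) * ∫ t in a..x, f t * (x - t) ^ (-α)) *
        (x - a) ^ (α - 1)}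
    Λ.Nonempty ∧ IsClosed Λ ∧ Λ ⊆ Set.Icc a x :=
  fractional_mean_value_set_nonempty_closed_general a b x α hx hα f hf
end

section
/- Let β > 0, 0 < α < 1, and f(t) = t^β. For each x > 0, the fractional mean value ξ(x) ∈ (0,x) determined by f(ξ(x))·x^{1-α}/Γ(2-α) = I^{1-α}_{0+}f(x) satisfies ξ(x)/x = (Γ(2-α)·Γ(1+β)/Γ(β-α+2))^{1/β}, a constant independent of x. -/
/-!
The substitution `t = x s` turns the Riemann–Liouville integral of `t ^ β` into `x ^ (β + 1 - α)`
times the Beta integral `B(β + 1, 1 - α) = Γ(β + 1) Γ(1 - α) / Γ(β + 2 - α)`. The mean-value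
equation therefore reads `(ξ / x) ^ β = Γ(2 - α) Γ(1 + β) / Γ(β - α + 2)`, whose right side does not
depend on `x`.
-/

open intervalIntegral

theorem Complex.betaIntegral_ofReal {s u : ℝ} (hs : 0 < s) (hu : 0 < u) :
    Complex.betaIntegral s u = ↑(Real.Gamma s * Real.Gamma u / Real.Gamma (s + u)) := by
  have h := Complex.Gamma_mul_Gamma_eq_betaIntegral (s := s) (t := u) (by simpa) (by simpa)
  have hne : (Real.Gamma (s + u) : ℂ) ≠ 0 := by
    exact_mod_cast (Real.Gamma_pos_of_pos (add_pos hs hu)).ne'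
  rw [← Complex.ofReal_add, Complex.Gamma_ofReal, Complex.Gamma_ofReal, Complex.Gamma_ofReal] at h
  rw [Complex.ofReal_div, Complex.ofReal_mul, eq_div_iff hne, h, mul_comm]

theorem integral_rpow_mul_sub_rpow {s u x : ℝ} (hs : 0 < s) (hu : 0 < u) (hx : 0 < x) :
    ∫ t in (0:ℝ)..x, t ^ (s - 1) * (x - t) ^ (u - 1) =
      x ^ (s + u - 1) * (Real.Gamma s * Real.Gamma u / Real.Gamma (s + u)) := by
  apply Complex.ofReal_injective
  rw [← integral_ofReal, Complex.ofReal_mul, Complex.ofReal_cpow hx.le,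
    ← Complex.betaIntegral_ofReal hs hu, Complex.ofReal_sub, Complex.ofReal_add, Complex.ofReal_one,
    ← Complex.betaIntegral_scaled _ _ hx]
  refine integral_congr fun t ht => ?_
  rw [Set.uIcc_of_le hx.le] at ht
  push_cast
  rw [Complex.ofReal_cpow ht.1, ← Complex.ofReal_sub, Complex.ofReal_cpow (sub_nonneg.2 ht.2)]
  push_cast
  ring_nf

theorem one_div_Gamma_mul_integral_rpow_mul_sub_rpow {α β x : ℝ} (hα : α < 1) (hβ : -1 < β)
    (hx : 0 < x) :
    1 / Real.Gamma (1 - α) * ∫ t in (0:ℝ)..x, t ^ β * (x - t) ^ (-α) =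
      Real.Gamma (1 + β) / Real.Gamma (β - α + 2) * x ^ (β + 1 - α) := by
  have h := integral_rpow_mul_sub_rpow (s := 1 + β) (u := 1 - α) (by linarith) (by linarith) hx
  have hΓ : Real.Gamma (1 - α) ≠ 0 := (Real.Gamma_pos_of_pos (by linarith)).ne'
  rw [add_sub_cancel_left, sub_sub_cancel_left] at h
  rw [h, show 1 + β + (1 - α) - 1 = β + 1 - α by ring, show 1 + β + (1 - α) = β - α + 2 by ring]
  field_simp

/-- For `f t = t^β` the fractional mean value `ξ(x)` satisfies
`ξ(x)/x = (Γ(2-α) Γ(1+β) / Γ(β-α+2))^(1/β)`, independent of `x`. -/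
theorem fractional_mean_value_rpow (α β : ℝ) (hα : α ∈ Set.Ioo (0:ℝ) 1) (hβ : 0 < β) :
    ∀ x : ℝ, 0 < x → ∀ ξ ∈ Set.Ioo (0:ℝ) x,
      ξ ^ β * x ^ (1 - α) / Real.Gamma (2 - α) =
        (1 / Real.Gamma (1 - α)) * (∫ t in (0:ℝ)..x, t ^ β * (x - t) ^ (-α)) →
      ξ / x = (Real.Gamma (2 - α) * Real.Gamma (1 + β) / Real.Gamma (β - α + 2)) ^ (1 / β) := by
  intro x hx ξ hξ hmean
  rw [one_div_Gamma_mul_integral_rpow_mul_sub_rpow hα.2 (by linarith) hx,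
    show β + 1 - α = β + (1 - α) by ring, Real.rpow_add hx] at hmean
  have hΓ₂ : 0 < Real.Gamma (2 - α) := Real.Gamma_pos_of_pos (by linarith [hα.2])
  have hΓ₃ : 0 < Real.Gamma (β - α + 2) := Real.Gamma_pos_of_pos (by linarith [hα.2])
  have hratio : (ξ / x) ^ β = Real.Gamma (2 - α) * Real.Gamma (1 + β) / Real.Gamma (β - α + 2) := by
    rw [Real.div_rpow hξ.1.le hx.le]
    field_simp at hmean ⊢
    exact hmean
  rw [one_div, Real.eq_rpow_inv (div_nonneg hξ.1.le hx.le) (by positivity) hβ.ne']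
  exact hratio
end

section
/- Let f ∈ C¹[a,b], 0 < α < 1, and suppose for all base points x₀ < y₀ in [a,b] and all admissible δ > 0, the fractional mean values ξ_x ∈ (x₀, x₀+δ) and ξ_y ∈ (y₀, y₀+δ) of f' satisfy ξ_x - x₀ = ξ_y - y₀ (property (P) for f'). Then: f is convex on [a,b] if and only if for all such x₀, y₀, δ one has D^α_{x₀+}f(·-x₀)(x₀+δ) ≤ D^α_{y₀+}f(·-y₀)(y₀+δ) (f is δ-increasing). -/
/-!
After the substitution `t = x₀ + s`, both fractional derivatives integrate `f'` against the same
weight `(δ - s)^(-α)` on `[0, δ]`, only shifted by the base point. So if `f'` is monotone (i.e. `f`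
is convex) they are ordered. Conversely, the weight has total mass `δ^(1-α)/(1-α) > 0`, so the
weighted means concentrate at the base points as `δ → 0⁺`, and their order passes to `f'`.
-/

open Set Filter Topology MeasureTheory intervalIntegral

section WeightedIntegral

variable {α δ : ℝ}

lemma integral_mul_rpow_neg_eq_integral_comp_add (g : ℝ → ℝ) (x₀ : ℝ) :
    (∫ t in x₀..(x₀ + δ), g t * (x₀ + δ - t) ^ (-α)) =
      ∫ s in (0:ℝ)..δ, g (x₀ + s) * (δ - s) ^ (-α) := by
  simpa [add_sub_add_left_eq_sub] using
    (integral_comp_add_left (fun t => g t * (x₀ + δ - t) ^ (-α)) x₀ (a := 0) (b := δ)).symm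

lemma intervalIntegrable_sub_rpow_neg (hα : α < 1) (δ : ℝ) :
    IntervalIntegrable (fun s : ℝ => (δ - s) ^ (-α)) volume 0 δ := by
  simpa using ((intervalIntegrable_rpow' (a := 0) (b := δ) (by linarith : -1 < -α)).comp_sub_left
    δ).symm

lemma integral_sub_rpow_neg (hα : α < 1) :
    (∫ s in (0:ℝ)..δ, (δ - s) ^ (-α)) = δ ^ (1 - α) / (1 - α) := by
  rw [integral_comp_sub_left (fun x : ℝ => x ^ (-α)) δ, sub_self, sub_zero,
    integral_rpow (Or.inl (by linarith)), Real.zero_rpow (by linarith : -α + 1 ≠ 0),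
    show -α + 1 = 1 - α by ring, sub_zero]

lemma integral_mul_sub_rpow_neg_mono (hα : α < 1) (hδ : 0 ≤ δ) {g h : ℝ → ℝ}
    (hg : ContinuousOn g (Icc 0 δ)) (hh : ContinuousOn h (Icc 0 δ))
    (hgh : ∀ s ∈ Ioo 0 δ, g s ≤ h s) :
    (∫ s in (0:ℝ)..δ, g s * (δ - s) ^ (-α)) ≤ ∫ s in (0:ℝ)..δ, h s * (δ - s) ^ (-α) := by
  have hw := intervalIntegrable_sub_rpow_neg hα δ
  refine integral_mono_on_of_le_Ioo hδ
    (hw.continuousOn_mul (by rwa [uIcc_of_le hδ])) (hw.continuousOn_mul (by rwa [uIcc_of_le hδ]))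
    fun s hs => ?_
  exact mul_le_mul_of_nonneg_right (hgh s hs) (Real.rpow_nonneg (by linarith [hs.2]) _)

lemma mul_le_integral_mul_sub_rpow_neg (hα : α < 1) (hδ : 0 ≤ δ) {g : ℝ → ℝ} {c : ℝ}
    (hg : ContinuousOn g (Icc 0 δ)) (hc : ∀ s ∈ Ioo 0 δ, c ≤ g s) :
    c * (δ ^ (1 - α) / (1 - α)) ≤ ∫ s in (0:ℝ)..δ, g s * (δ - s) ^ (-α) := by
  rw [← integral_sub_rpow_neg hα, ← intervalIntegral.integral_const_mul]
  exact integral_mul_sub_rpow_neg_mono hα hδ continuousOn_const hg hc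

lemma integral_mul_sub_rpow_neg_le_mul (hα : α < 1) (hδ : 0 ≤ δ) {g : ℝ → ℝ} {c : ℝ}
    (hg : ContinuousOn g (Icc 0 δ)) (hc : ∀ s ∈ Ioo 0 δ, g s ≤ c) :
    (∫ s in (0:ℝ)..δ, g s * (δ - s) ^ (-α)) ≤ c * (δ ^ (1 - α) / (1 - α)) := by
  rw [← integral_sub_rpow_neg hα, ← intervalIntegral.integral_const_mul]
  exact integral_mul_sub_rpow_neg_mono hα hδ hg continuousOn_const hc

end WeightedIntegral

lemma ContinuousOn.comp_add_left_Icc {g : ℝ → ℝ} {a b u δ : ℝ} (hg : ContinuousOn g (Icc a b))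
    (hu : a ≤ u) (hub : u + δ ≤ b) : ContinuousOn (fun s => g (u + s)) (Icc 0 δ) :=
  hg.comp (continuous_const_add u).continuousOn fun s hs =>
    ⟨by linarith [hs.1], by linarith [hs.2]⟩

lemma ContinuousWithinAt.eventually_forall_Icc_mem {g : ℝ → ℝ} {u : ℝ}
    (hg : ContinuousWithinAt g (Ici u) u) {U : Set ℝ} (hU : U ∈ 𝓝 (g u)) :
    ∀ᶠ δ in 𝓝[>] 0, ∀ s ∈ Icc 0 δ, g (u + s) ∈ U := by
  obtain ⟨r, hr, hsub⟩ := mem_nhdsGE_iff_exists_Ico_subset.1 (hg hU)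
  filter_upwards [Ioo_mem_nhdsGT (sub_pos.2 hr)] with δ hδ s hs
  exact hsub ⟨by linarith [hs.1], by linarith [hs.2, hδ.2]⟩

lemma integral_mul_sub_rpow_neg_le_of_monotoneOn {α a b x₀ y₀ δ : ℝ} (hα : α < 1) {g : ℝ → ℝ}
    (hg : ContinuousOn g (Icc a b)) (hmono : MonotoneOn g (Ioo a b))
    (ha : a ≤ x₀) (hxy : x₀ ≤ y₀) (hb : y₀ + δ ≤ b) (hδ : 0 ≤ δ) :
    (∫ s in (0:ℝ)..δ, g (x₀ + s) * (δ - s) ^ (-α)) ≤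
      ∫ s in (0:ℝ)..δ, g (y₀ + s) * (δ - s) ^ (-α) :=
  integral_mul_sub_rpow_neg_mono hα hδ (hg.comp_add_left_Icc ha (by linarith))
    (hg.comp_add_left_Icc (by linarith) hb) fun s hs =>
      hmono ⟨by linarith [hs.1], by linarith [hs.2]⟩ ⟨by linarith [hs.1], by linarith [hs.2]⟩
        (by linarith)

lemma le_of_eventually_integral_mul_sub_rpow_neg_le {α a b u v : ℝ} (hα : α < 1) {g : ℝ → ℝ}
    (hg : ContinuousOn g (Icc a b)) (hu : u ∈ Ico a b) (hv : v ∈ Ico a b)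
    (H : ∀ᶠ δ in 𝓝[>] 0, (∫ s in (0:ℝ)..δ, g (u + s) * (δ - s) ^ (-α)) ≤
      ∫ s in (0:ℝ)..δ, g (v + s) * (δ - s) ^ (-α)) :
    g u ≤ g v := by
  have hcont {w : ℝ} (hw : w ∈ Ico a b) : ContinuousWithinAt g (Ici w) w :=
    (hg w (Ico_subset_Icc_self hw)).mono_of_mem_nhdsWithin
      (mem_of_superset (Icc_mem_nhdsGE hw.2) (Icc_subset_Icc_left hw.1))
  by_contra! hvu
  obtain ⟨c₁, hvc₁, hc₁u⟩ := exists_between hvu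
  obtain ⟨c₂, hc₁₂, hc₂u⟩ := exists_between hc₁u
  have hu' : ∀ᶠ δ in 𝓝[>] (0:ℝ), δ ∈ Ioo 0 (b - u) := Ioo_mem_nhdsGT (sub_pos.2 hu.2)
  have hv' : ∀ᶠ δ in 𝓝[>] (0:ℝ), δ ∈ Ioo 0 (b - v) := Ioo_mem_nhdsGT (sub_pos.2 hv.2)
  obtain ⟨δ, ⟨hδ, hδu⟩, ⟨-, hδv⟩, hlow, hup, hH⟩ :=
    (hu'.and <| hv'.and <| ((hcont hu).eventually_forall_Icc_mem (Ioi_mem_nhds hc₂u)).and <|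
      ((hcont hv).eventually_forall_Icc_mem (Iio_mem_nhds hvc₁)).and H).exists
  have hW : 0 < δ ^ (1 - α) / (1 - α) := div_pos (Real.rpow_pos_of_pos hδ _) (by linarith)
  have hle : c₂ * (δ ^ (1 - α) / (1 - α)) ≤ c₁ * (δ ^ (1 - α) / (1 - α)) :=
    calc c₂ * (δ ^ (1 - α) / (1 - α))
        ≤ ∫ s in (0:ℝ)..δ, g (u + s) * (δ - s) ^ (-α) :=
          mul_le_integral_mul_sub_rpow_neg hα hδ.le (hg.comp_add_left_Icc hu.1 (by linarith))
            fun s hs => (hlow s (Ioo_subset_Icc_self hs)).le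
      _ ≤ ∫ s in (0:ℝ)..δ, g (v + s) * (δ - s) ^ (-α) := hH
      _ ≤ c₁ * (δ ^ (1 - α) / (1 - α)) :=
          integral_mul_sub_rpow_neg_le_mul hα hδ.le (hg.comp_add_left_Icc hv.1 (by linarith))
            fun s hs => (hup s (Ioo_subset_Icc_self hs)).le
  linarith [(mul_le_mul_iff_left₀ hW).1 hle]

lemma convexOn_Icc_iff_monotoneOn_Ioo {a b : ℝ} {f f' : ℝ → ℝ}
    (hderiv : ∀ t ∈ Icc a b, HasDerivAt f (f' t) t) :
    ConvexOn ℝ (Icc a b) f ↔ MonotoneOn f' (Ioo a b) := by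
  have hderiv_eq : EqOn (deriv f) f' (Icc a b) := fun t ht => (hderiv t ht).deriv
  constructor
  · intro hconv
    exact ((hconv.monotoneOn_deriv fun t ht => (hderiv t ht).differentiableAt).congr
      hderiv_eq).mono Ioo_subset_Icc_self
  · intro hmono
    refine MonotoneOn.convexOn_of_deriv (convex_Icc a b)
      (fun t ht => (hderiv t ht).continuousAt.continuousWithinAt) ?_ ?_ <;> rw [interior_Icc]
    · exact fun t ht => (hderiv t (Ioo_subset_Icc_self ht)).differentiableAt.differentiableWithinAt
    · exact hmono.congr (hderiv_eq.mono Ioo_subset_Icc_self).symm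

theorem convex_iff_delta_increasing_general (a b α : ℝ) (hα : α ∈ Set.Ioo (0:ℝ) 1)
    (f f' : ℝ → ℝ) (hderiv : ∀ t ∈ Set.Icc a b, HasDerivAt f (f' t) t)
    (hf' : ContinuousOn f' (Set.Icc a b)) :
    ConvexOn ℝ (Set.Icc a b) f ↔
      ∀ x₀ y₀ δ : ℝ, a ≤ x₀ → x₀ + δ < y₀ → y₀ + δ ≤ b → 0 < δ →
        (1 / Real.Gamma (1 - α)) * (∫ t in x₀..(x₀ + δ), f' t * (x₀ + δ - t) ^ (-α)) ≤
          (1 / Real.Gamma (1 - α)) * (∫ t in y₀..(y₀ + δ), f' t * (y₀ + δ - t) ^ (-α)) := by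
  have hΓ : 0 < 1 / Real.Gamma (1 - α) := one_div_pos.2 (Real.Gamma_pos_of_pos (by linarith [hα.2]))
  simp only [integral_mul_rpow_neg_eq_integral_comp_add, mul_le_mul_iff_right₀ hΓ,
    convexOn_Icc_iff_monotoneOn_Ioo hderiv]
  constructor
  · intro hmono x₀ y₀ δ hax hxy hyb hδ
    exact integral_mul_sub_rpow_neg_le_of_monotoneOn hα.2 hf' hmono hax (by linarith) hyb hδ.le
  · intro H u hu v hv huv
    rcases huv.eq_or_lt with rfl | huv
    · exact le_rfl
    refine le_of_eventually_integral_mul_sub_rpow_neg_le hα.2 hf' (Ioo_subset_Ico_self hu)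
      (Ioo_subset_Ico_self hv) ?_
    filter_upwards [Ioo_mem_nhdsGT (sub_pos.2 huv), Ioo_mem_nhdsGT (sub_pos.2 hv.2)]
      with δ hδu hδv
    exact H u v δ hu.1.le (by linarith [hδu.2]) (by linarith [hδv.2]) hδu.1

/-- Theorem 4.5: if `f'` satisfies property (P) (translation-invariance of fractional
mean values), then `f` is convex on `[a,b]` iff `f` is δ-increasing, i.e. the
Riemann–Liouville derivatives `D^α_{x₀+} f (x₀+δ) = I^{1-α}_{x₀+} f' (x₀+δ)` are
monotone in the base point. -/
theorem convex_iff_delta_increasing (a b α : ℝ) (hab : a < b) (hα : α ∈ Set.Ioo (0:ℝ) 1)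
    (f f' : ℝ → ℝ) (hderiv : ∀ t ∈ Set.Icc a b, HasDerivAt f (f' t) t)
    (hf' : ContinuousOn f' (Set.Icc a b))
    (hP : ∀ x₀ y₀ δ : ℝ, a ≤ x₀ → x₀ + δ < y₀ → y₀ + δ ≤ b → 0 < δ →
      ∀ ξx ∈ Set.Ioo x₀ (x₀ + δ), ∀ ξy ∈ Set.Ioo y₀ (y₀ + δ),
        f' ξx * δ ^ (1 - α) / Real.Gamma (2 - α) =
          (1 / Real.Gamma (1 - α)) * (∫ t in x₀..(x₀ + δ), f' t * (x₀ + δ - t) ^ (-α)) →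
        f' ξy * δ ^ (1 - α) / Real.Gamma (2 - α) =
          (1 / Real.Gamma (1 - α)) * (∫ t in y₀..(y₀ + δ), f' t * (y₀ + δ - t) ^ (-α)) →
        ξx - x₀ = ξy - y₀) :
    ConvexOn ℝ (Set.Icc a b) f ↔
      ∀ x₀ y₀ δ : ℝ, a ≤ x₀ → x₀ + δ < y₀ → y₀ + δ ≤ b → 0 < δ →
        (1 / Real.Gamma (1 - α)) * (∫ t in x₀..(x₀ + δ), f' t * (x₀ + δ - t) ^ (-α)) ≤
          (1 / Real.Gamma (1 - α)) * (∫ t in y₀..(y₀ + δ), f' t * (y₀ + δ - t) ^ (-α)) :=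
  convex_iff_delta_increasing_general a b α hα f f' hderiv hf'
end

section
/- Let 0 < α < 1 and let f : ℝ → ℝ be continuous and periodic with period τ > 0, such that the Riemann–Liouville derivative D^α_{0+}f exists and I^α_{0+}(D^α_{0+}f(·+τ) - D^α_{0+}f)(x) = 0 for all x, with the convolution-kernel representation valid. Then D^α_{0+}f(x+τ) = D^α_{0+}f(x) for all x > 0: periodic functions have periodic fractional derivatives with the same period. -/
/-!
Write `I^a` for the Riemann–Liouville integral from `0`. By Fubini on the triangle
`0 < t ≤ x ≤ y` and the Beta integral, `I^(1-α) (I^α g) = I^1 g`. Hence if `I^α g` vanishes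
on `(0, ∞)`, so does the primitive of `g`, and so does `g` when it is continuous. Apply this to
`g = D^α f (· + τ) - D^α f`.
-/

open MeasureTheory Set intervalIntegral

lemma intervalIntegrable_sub_rpow_left {r : ℝ} (hr : -1 < r) (c x : ℝ) :
    IntervalIntegrable (fun t => (x - t) ^ r) volume c x := by
  simpa using ((intervalIntegrable_rpow' (a := 0) (b := x - c) hr).comp_sub_left x).symm

lemma intervalIntegrable_sub_rpow_right {r : ℝ} (hr : -1 < r) (c x : ℝ) :
    IntervalIntegrable (fun t => (t - c) ^ r) volume c x := by
  simpa using (intervalIntegrable_rpow' (a := 0) (b := x - c) hr).comp_sub_right c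

section Beta

variable {a b : ℝ}

noncomputable def betaReal (a b : ℝ) : ℝ := ∫ s in (0:ℝ)..1, s ^ (a - 1) * (1 - s) ^ (b - 1)

lemma intervalIntegrable_betaKernel (ha : 0 < a) (hb : 0 < b) {t y : ℝ} (hty : t < y) :
    IntervalIntegrable (fun x => (x - t) ^ (a - 1) * (y - x) ^ (b - 1)) volume t y := by
  have htm : t < (t + y) / 2 := by linarith
  have hmy : (t + y) / 2 < y := by linarith
  refine IntervalIntegrable.trans (b := (t + y) / 2) ?_ ?_
  · refine (intervalIntegrable_sub_rpow_right (by linarith) t _).mul_continuousOn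
      (ContinuousOn.rpow_const (by fun_prop) fun x hx => Or.inl ?_)
    rw [uIcc_of_le htm.le] at hx
    linarith [hx.2]
  · refine (intervalIntegrable_sub_rpow_left (by linarith) _ y).continuousOn_mul
      (ContinuousOn.rpow_const (by fun_prop) fun x hx => Or.inl ?_)
    rw [uIcc_of_le hmy.le] at hx
    linarith [hx.1]

lemma betaReal_pos (ha : 0 < a) (hb : 0 < b) : 0 < betaReal a b := by
  refine intervalIntegral_pos_of_pos_on
    (by simpa using intervalIntegrable_betaKernel ha hb zero_lt_one) (fun s hs => ?_) one_pos
  have : 0 < 1 - s := by linarith [hs.2]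
  have : 0 < s := hs.1
  positivity

lemma integral_betaKernel {t y : ℝ} (hty : t < y) :
    ∫ x in t..y, (x - t) ^ (a - 1) * (y - x) ^ (b - 1) = (y - t) ^ (a + b - 1) * betaReal a b := by
  have hyt : 0 < y - t := by linarith
  have hsubst : ∀ s ∈ uIcc (0:ℝ) 1,
      ((y - t) * s + t - t) ^ (a - 1) * (y - ((y - t) * s + t)) ^ (b - 1)
        = ((y - t) ^ (a - 1) * (y - t) ^ (b - 1)) * (s ^ (a - 1) * (1 - s) ^ (b - 1)) := by
    intro s hs
    rw [uIcc_of_le zero_le_one] at hs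
    rw [show (y - t) * s + t - t = (y - t) * s by ring,
      show y - ((y - t) * s + t) = (y - t) * (1 - s) by ring,
      Real.mul_rpow hyt.le hs.1, Real.mul_rpow hyt.le (by linarith [hs.2])]
    ring
  have := smul_integral_comp_mul_add (a := 0) (b := 1)
    (fun x => (x - t) ^ (a - 1) * (y - x) ^ (b - 1)) (y - t) t
  simp only [mul_zero, zero_add, mul_one, sub_add_cancel, smul_eq_mul] at this
  rw [← this, intervalIntegral.integral_congr hsubst, intervalIntegral.integral_const_mul,
    betaReal, show a + b - 1 = 1 + (a - 1) + (b - 1) by ring, Real.rpow_add hyt, Real.rpow_add hyt,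
    Real.rpow_one]
  ring

end Beta

def triangle (y : ℝ) : Set (ℝ × ℝ) := {p | 0 < p.2 ∧ p.2 ≤ p.1 ∧ p.1 ≤ y}

lemma measurableSet_triangle (y : ℝ) : MeasurableSet (triangle y) :=
  (measurableSet_lt measurable_const measurable_snd).inter
    ((measurableSet_le measurable_snd measurable_fst).inter
      (measurableSet_le measurable_fst measurable_const))

lemma integral_indicator_triangle_left {F : ℝ → ℝ → ℝ} {y : ℝ} (x : ℝ) :
    ∫ t, (triangle y).indicator (Function.uncurry F) (x, t)
      = (Ioc 0 y).indicator (fun x => ∫ t in (0:ℝ)..x, F x t) x := by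
  by_cases hx : x ∈ Ioc 0 y
  · rw [indicator_of_mem hx, intervalIntegral.integral_of_le hx.1.le,
      ← MeasureTheory.integral_indicator measurableSet_Ioc]
    congr 1 with t
    simp [triangle, indicator_apply, hx.2]
  · rw [indicator_of_notMem hx, ← integral_zero ℝ ℝ]
    congr 1 with t
    exact indicator_of_notMem (fun h => hx ⟨h.1.trans_le h.2.1, h.2.2⟩) _

lemma indicator_triangle_slice_right {F : ℝ → ℝ → ℝ} {y : ℝ} (t : ℝ) :
    (fun x => (triangle y).indicator (Function.uncurry F) (x, t))
      = (Ioc 0 y).indicator (fun t => (Icc t y).indicator (F · t)) t := by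
  by_cases ht : t ∈ Ioc 0 y
  · ext x
    simp [triangle, indicator_apply, ht, ht.1]
  · ext x
    rw [indicator_of_notMem ht]
    exact indicator_of_notMem (fun h => ht ⟨h.1, h.2.1.trans h.2.2⟩) _

lemma integral_indicator_triangle_right {F : ℝ → ℝ → ℝ} {y : ℝ} (t : ℝ) :
    ∫ x, (triangle y).indicator (Function.uncurry F) (x, t)
      = (Ioc 0 y).indicator (fun t => ∫ x in t..y, F x t) t := by
  rw [indicator_triangle_slice_right]
  by_cases ht : t ∈ Ioc 0 y
  · rw [indicator_of_mem ht, indicator_of_mem ht, intervalIntegral.integral_of_le ht.2,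
      MeasureTheory.integral_indicator measurableSet_Icc, integral_Icc_eq_integral_Ioc]
  · simp [indicator_of_notMem ht]

lemma integral_integral_swap_triangle {F : ℝ → ℝ → ℝ} {y : ℝ} (hy : 0 ≤ y)
    (hF : IntegrableOn (Function.uncurry F) (triangle y)) :
    ∫ x in (0:ℝ)..y, ∫ t in (0:ℝ)..x, F x t = ∫ t in (0:ℝ)..y, ∫ x in t..y, F x t := by
  rw [← integrable_indicator_iff (measurableSet_triangle y), Measure.volume_eq_prod] at hF
  have := integral_integral_swap
    (f := fun x t => (triangle y).indicator (Function.uncurry F) (x, t)) hF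
  simp only [integral_indicator_triangle_left, integral_indicator_triangle_right,
    MeasureTheory.integral_indicator measurableSet_Ioc] at this
  rwa [intervalIntegral.integral_of_le hy, intervalIntegral.integral_of_le hy]

lemma integrableOn_triangle_mul_rpow_mul_rpow {a b : ℝ} (ha : 0 < a) (hb : 0 < b) {g : ℝ → ℝ}
    (hg : Continuous g) (y : ℝ) :
    IntegrableOn (fun p : ℝ × ℝ => g p.2 * (p.1 - p.2) ^ (a - 1) * (y - p.1) ^ (b - 1))
      (triangle y) := by
  set F : ℝ → ℝ → ℝ := fun x t => g t * (x - t) ^ (a - 1) * (y - x) ^ (b - 1)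
  set bound := (Ioc 0 y).indicator (fun t => |g t| * ((y - t) ^ (a + b - 1) * betaReal a b))
  have hbound : Integrable bound := by
    refine (integrable_indicator_iff measurableSet_Ioc).2
      (IntegrableOn.mono_set ?_ Ioc_subset_uIoc)
    exact (((intervalIntegrable_sub_rpow_left (by linarith) 0 y).mul_const _).continuousOn_mul
      hg.abs.continuousOn).def'
  have hmeas : Measurable ((triangle y).indicator (Function.uncurry F)) :=
    (by fun_prop : Measurable (Function.uncurry F)).indicator (measurableSet_triangle y)
  change IntegrableOn (Function.uncurry F) (triangle y)
  rw [← integrable_indicator_iff (measurableSet_triangle y), Measure.volume_eq_prod,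
    integrable_prod_iff' hmeas.aestronglyMeasurable]
  refine ⟨?_, hbound.mono'
    hmeas.stronglyMeasurable.norm.integral_prod_left'.aestronglyMeasurable ?_⟩
  · filter_upwards [Measure.ae_ne volume y] with t hty
    rw [indicator_triangle_slice_right]
    by_cases ht : t ∈ Ioc 0 y
    · rw [indicator_of_mem ht, integrable_indicator_iff measurableSet_Icc,
        integrableOn_Icc_iff_integrableOn_Ioc,
        ← intervalIntegrable_iff_integrableOn_Ioc_of_le ht.2]
      simpa only [F, mul_assoc] using
        (intervalIntegrable_betaKernel ha hb (lt_of_le_of_ne ht.2 hty)).const_mul (g t)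
    · rw [indicator_of_notMem ht]
      exact integrable_zero _ _ _
  · filter_upwards [Measure.ae_ne volume y] with t hty
    rw [Real.norm_of_nonneg (integral_nonneg fun _ => norm_nonneg _)]
    simp only [norm_indicator_eq_indicator_norm]
    refine (integral_indicator_triangle_right (F := fun x t => ‖F x t‖) t).trans_le ?_
    by_cases ht : t ∈ Ioc 0 y
    · simp only [bound, indicator_of_mem ht]
      rw [← integral_betaKernel (lt_of_le_of_ne ht.2 hty), ← intervalIntegral.integral_const_mul]
      refine (integral_congr fun x hx => ?_).le
      rw [uIcc_of_le ht.2] at hx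
      simp only [F, norm_mul, Real.norm_eq_abs,
        abs_of_nonneg (Real.rpow_nonneg (sub_nonneg.2 hx.1) _),
        abs_of_nonneg (Real.rpow_nonneg (sub_nonneg.2 hx.2) _), mul_assoc]
    · simp [indicator_of_notMem ht, bound]

/-- `Γ(a)` times the Riemann–Liouville integral `I^a g` from `0`. -/
noncomputable def rlIntegral (a : ℝ) (g : ℝ → ℝ) (x : ℝ) : ℝ :=
  ∫ t in (0:ℝ)..x, g t * (x - t) ^ (a - 1)

lemma rlIntegral_rlIntegral {a b : ℝ} (ha : 0 < a) (hb : 0 < b) {g : ℝ → ℝ}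
    (hg : Continuous g) {y : ℝ} (hy : 0 ≤ y) :
    rlIntegral b (rlIntegral a g) y = betaReal a b * rlIntegral (a + b) g y := by
  calc rlIntegral b (rlIntegral a g) y
      = ∫ x in (0:ℝ)..y, ∫ t in (0:ℝ)..x, g t * (x - t) ^ (a - 1) * (y - x) ^ (b - 1) := by
        simp only [rlIntegral, ← intervalIntegral.integral_mul_const]
    _ = ∫ t in (0:ℝ)..y, ∫ x in t..y, g t * (x - t) ^ (a - 1) * (y - x) ^ (b - 1) :=
        integral_integral_swap_triangle hy (integrableOn_triangle_mul_rpow_mul_rpow ha hb hg y)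
    _ = ∫ t in (0:ℝ)..y, betaReal a b * (g t * (y - t) ^ (a + b - 1)) := by
        refine integral_congr_ae ?_
        filter_upwards [Measure.ae_ne volume y] with t hty ht
        rw [uIoc_of_le hy] at ht
        simp only [mul_assoc]
        rw [intervalIntegral.integral_const_mul, integral_betaKernel (lt_of_le_of_ne ht.2 hty)]
        ring
    _ = betaReal a b * rlIntegral (a + b) g y := intervalIntegral.integral_const_mul _ _

lemma eq_zero_of_forall_integral_eq_zero {g : ℝ → ℝ} (hg : Continuous g)
    (h : ∀ y, 0 < y → ∫ t in (0:ℝ)..y, g t = 0) {x : ℝ} (hx : 0 < x) : g x = 0 := by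
  have hprim : (fun y => ∫ t in (0:ℝ)..y, g t) =ᶠ[nhds x] fun _ => 0 :=
    Filter.eventually_of_mem (Ioi_mem_nhds hx) h
  rw [← hg.deriv_integral g 0 x, hprim.deriv_eq, deriv_const]

lemma eq_zero_of_rlIntegral_eq_zero {a : ℝ} (ha : 0 < a) (ha1 : a < 1) {g : ℝ → ℝ}
    (hg : Continuous g) (h : ∀ x, 0 < x → rlIntegral a g x = 0) {x : ℝ} (hx : 0 < x) :
    g x = 0 := by
  refine eq_zero_of_forall_integral_eq_zero hg (fun y hy => ?_) hx
  have hb : 0 < 1 - a := sub_pos.2 ha1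
  have hlhs : rlIntegral (1 - a) (rlIntegral a g) y = 0 := by
    refine (integral_congr fun t ht => ?_).trans intervalIntegral.integral_zero
    rcases (uIcc_of_le hy.le ▸ ht).1.eq_or_lt with rfl | ht0
    · simp [rlIntegral]
    · simp [h t ht0]
  have hrhs : rlIntegral 1 g y = ∫ t in (0:ℝ)..y, g t := by simp [rlIntegral]
  have hsemigroup := rlIntegral_rlIntegral ha hb hg hy.le
  rw [add_sub_cancel, hlhs, hrhs] at hsemigroup
  exact (mul_eq_zero.1 hsemigroup.symm).resolve_left (betaReal_pos ha hb).ne'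

theorem periodic_fractional_derivative_general (α τ : ℝ) (hα : α ∈ Set.Ioo (0:ℝ) 1)
    (f : ℝ → ℝ) :
    let Df : ℝ → ℝ :=
      fun x => deriv (fun y => (1 / Real.Gamma (1 - α)) *
        ∫ t in (0:ℝ)..y, f t * (y - t) ^ (-α)) x
    Continuous Df →
    (∀ x : ℝ, 0 < x →
      (1 / Real.Gamma α) * (∫ t in (0:ℝ)..x, (Df (t + τ) - Df t) * (x - t) ^ (α - 1)) = 0) →
    ∀ x : ℝ, 0 < x → Df (x + τ) = Df x := by
  intro Df hDf h x hx
  have hΓ : 1 / Real.Gamma α ≠ 0 := one_div_ne_zero (Real.Gamma_pos_of_pos hα.1).ne'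
  refine sub_eq_zero.1 (eq_zero_of_rlIntegral_eq_zero hα.1 hα.2
    ((hDf.comp (continuous_add_const τ)).sub hDf) (fun y hy => ?_) hx)
  exact (mul_eq_zero.1 (h y hy)).resolve_left hΓ

/-- Remark 4.7 (periodicity): a periodic function has a periodic Riemann–Liouville
fractional derivative with the same period. -/
theorem periodic_fractional_derivative (α τ : ℝ) (hα : α ∈ Set.Ioo (0:ℝ) 1) (hτ : 0 < τ)
    (f : ℝ → ℝ) (hf : Continuous f) (hper : Function.Periodic f τ) :
    let Df : ℝ → ℝ :=
      fun x => deriv (fun y => (1 / Real.Gamma (1 - α)) *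
        ∫ t in (0:ℝ)..y, f t * (y - t) ^ (-α)) x
    Continuous Df →
    (∀ x : ℝ, 0 < x →
      (1 / Real.Gamma α) * (∫ t in (0:ℝ)..x, (Df (t + τ) - Df t) * (x - t) ^ (α - 1)) = 0) →
    ∀ x : ℝ, 0 < x → Df (x + τ) = Df x :=
  periodic_fractional_derivative_general α τ hα f
end
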